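/- arXiv:1310.3599 — 3 statements merged into one kernel-verified Lean document; each statement's English description precedes it below -/
import Mathlib

section
/- If (t,i) is a connection from L to K with K finite and L = K, then t = id and i = id. -/
/-- If (t,i) is a connection from K to K (K finite), then
t = id and i = id. -/
theorem connection_self_eq_id (K : ℕ)
    (t : Fin K → Fin K) (i : Fin K → Fin K)
    (h1 : ∀ x, t (i x) = x)
    (h2 : ∀ x y : Fin K, y ≤ i x → t y ≤ x) :
    t = id ∧ i = id := by
  have hinj : Function.Injective i := fun a b hab => by
    have := h1 a; rw [hab, h1] at this; exact this.symm
  have hsurj : Function.Surjective i := Finite.surjective_of_injective hinj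
  have hmono : StrictMono i := by
    intro a b hab
    by_contra h
    push_neg at h
    have := h2 a (i b) h
    rw [h1] at this
    exact absurd hab (not_lt.mpr this)
  have hi : i = id := by
    have he : StrictMono.orderIsoOfSurjective i hmono hsurj = OrderIso.refl (Fin K) :=
      Subsingleton.elim _ _
    funext x
    have := congrArg (fun f => (f : Fin K ≃o Fin K) x) he
    simpa using this
  refine ⟨funext fun x => ?_, hi⟩
  have := h1 x
  rw [hi] at this
  exact this
end

section
/- Infinite Hales–Jewett theorem for left-variable words: for any finite alphabet A and any finite coloring of the set W_A of finite words over A, there exist a word w₀ ∈ W_A and an infinite sequence X = (xₙ) of left-variable words (variable words in which the variable occurs in the first position) such that the set { w₀⌢x_{n₀}(α₀)⌢⋯⌢x_{n_k}(α_k) : n₀ < ⋯ < n_k, α_i ∈ A } is monochromatic. -/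
/-- A variable word over A is a list over `Option A`, where `none` is the
variable `v`; it is a left-variable word if `v` occurs in the first
position. -/
def IsLeftVariableWord {A : Type} (x : List (Option A)) : Prop :=
  x.head? = some none

/-- Substituting the letter `a` for all occurrences of the variable. -/
def subst {A : Type} (x : List (Option A)) (a : A) : List A :=
  x.map (fun o => o.getD a)

open Filter

attribute [local instance] Ultrafilter.mul Ultrafilter.semigroup

namespace IHJaux

variable {A : Type}

local instance listSG : Semigroup (List (Option A)) :=
  { mul := (· ++ ·), mul_assoc := List.append_assoc }

lemma lmul_def (x y : List (Option A)) : x * y = x ++ y := rfl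

def iota (u : List A) : List (Option A) := u.map some

def sig (a : A) (x : List (Option A)) : List (Option A) :=
  x.map (fun o => some (o.getD a))

lemma iota_mul (u v : List A) : iota (u ++ v) = iota u * iota v := by
  simp [iota, lmul_def]

lemma sig_mul (a : A) (x y : List (Option A)) : sig a (x * y) = sig a x * sig a y := by
  simp [sig, lmul_def]

lemma sig_iota (a : A) (u : List A) : sig a (iota u) = iota u := by
  simp [sig, iota, List.map_map, Function.comp]

lemma iota_inj : Function.Injective (iota (A := A)) :=
  List.map_injective_iff.mpr (Option.some_injective A)

lemma sig_mem_range (a : A) (x : List (Option A)) : sig a x ∈ Set.range (iota (A := A)) := by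
  refine ⟨x.map (fun o => o.getD a), ?_⟩
  simp [iota, sig, List.map_map, Function.comp]

lemma usup {U : Ultrafilter (List (Option A))} {s t : Set (List (Option A))}
    (h : s ∈ U) (hsub : s ⊆ t) : t ∈ U :=
  Ultrafilter.mem_coe.mp (Filter.mem_of_superset (Ultrafilter.mem_coe.mpr h) hsub)

lemma uinter {U : Ultrafilter (List (Option A))} {s t : Set (List (Option A))}
    (h : s ∈ U) (h' : t ∈ U) : s ∩ t ∈ U :=
  Ultrafilter.mem_coe.mp (Filter.inter_mem (Ultrafilter.mem_coe.mpr h) (Ultrafilter.mem_coe.mpr h'))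

lemma uiInter {ι : Sort*} [Finite ι] {U : Ultrafilter (List (Option A))}
    {s : ι → Set (List (Option A))} (h : ∀ i, s i ∈ U) : (⋂ i, s i) ∈ U :=
  Ultrafilter.mem_coe.mp (Filter.iInter_mem.mpr fun i => Ultrafilter.mem_coe.mpr (h i))

lemma mem_umul {U V : Ultrafilter (List (Option A))} {s : Set (List (Option A))} :
    s ∈ U * V ↔ {m | {m' | m * m' ∈ s} ∈ V} ∈ U := Iff.rfl

lemma mul_large {U V : Ultrafilter (List (Option A))} {s t u : Set (List (Option A))}
    (hs : s ∈ U) (ht : t ∈ V) (h : ∀ x ∈ s, ∀ y ∈ t, x * y ∈ u) : u ∈ U * V := by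
  rw [mem_umul]
  exact usup hs fun x hx => usup ht fun y hy => h x hx y hy

lemma umap_mul (f : List (Option A) → List (Option A))
    (hf : ∀ x y, f (x * y) = f x * f y) (U V : Ultrafilter (List (Option A))) :
    (U * V).map f = U.map f * V.map f := by
  refine Ultrafilter.coe_inj.mp (Filter.ext fun s => ?_)
  simp only [Ultrafilter.mem_coe, Ultrafilter.mem_map, mem_umul, Set.preimage_setOf_eq,
    Set.mem_preimage, Set.mem_setOf_eq, hf]

lemma umap_fix {f : List (Option A) → List (Option A)} {U : Ultrafilter (List (Option A))}
    (h : {m | f m = m} ∈ U) : U.map f = U := by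
  refine Ultrafilter.coe_inj.mp (Filter.ext fun s => ?_)
  simp only [Ultrafilter.mem_coe, Ultrafilter.mem_map]
  constructor
  · intro hs
    refine usup (uinter hs h) fun m hm => ?_
    have h1 : f m ∈ s := hm.1
    have h2 : f m = m := hm.2
    rwa [h2] at h1
  · intro hs
    refine usup (uinter hs h) fun m hm => ?_
    have h2 : f m = m := hm.2
    show f m ∈ s
    rw [h2]
    exact hm.1

section Construct

variable [Fintype A]

noncomputable def Gseq (Cstar : Set (List (Option A)))
    (σ : A → List (Option A) → List (Option A))
    (yf : (F : List (List (Option A))) → (∀ P ∈ F, P ∈ Cstar) → List (Option A))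
    (hy : ∀ F hF, ∀ a, ∀ P ∈ F, P * σ a (yf F hF) ∈ Cstar)
    (w₀ : List (Option A)) (hw : w₀ ∈ Cstar) :
    (n : ℕ) → {F : List (List (Option A)) // ∀ P ∈ F, P ∈ Cstar}
  | 0 => ⟨[w₀], by intro P hP; rw [List.mem_singleton] at hP; rwa [hP]⟩
  | n+1 =>
    let s := Gseq Cstar σ yf hy w₀ hw n
    ⟨s.1 ++ (Finset.univ : Finset A).toList.flatMap
        (fun a => s.1.map (· * σ a (yf s.1 s.2))), by
      intro P hP
      rcases List.mem_append.mp hP with h | h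
      · exact s.2 P h
      · rcases List.mem_flatMap.mp h with ⟨a, _, hmem⟩
        rcases List.mem_map.mp hmem with ⟨Q, hQ, rfl⟩
        exact hy s.1 s.2 a Q hQ⟩

variable (Cstar : Set (List (Option A))) (σ : A → List (Option A) → List (Option A))
    (yf : (F : List (List (Option A))) → (∀ P ∈ F, P ∈ Cstar) → List (Option A))
    (hy : ∀ F hF, ∀ a, ∀ P ∈ F, P * σ a (yf F hF) ∈ Cstar)
    (w₀ : List (Option A)) (hw : w₀ ∈ Cstar)

lemma Gseq_succ (n : ℕ) :
    (Gseq Cstar σ yf hy w₀ hw (n+1)).1 =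
      (Gseq Cstar σ yf hy w₀ hw n).1 ++ (Finset.univ : Finset A).toList.flatMap
        (fun a => (Gseq Cstar σ yf hy w₀ hw n).1.map
          (· * σ a (yf (Gseq Cstar σ yf hy w₀ hw n).1 (Gseq Cstar σ yf hy w₀ hw n).2))) := by
  rfl

/-- The chosen sequence. -/
noncomputable def Xseq (n : ℕ) : List (Option A) :=
  yf (Gseq Cstar σ yf hy w₀ hw n).1 (Gseq Cstar σ yf hy w₀ hw n).2

lemma Xseq_mem_V (Vset : Set (List (Option A)))
    (hyV : ∀ F hF, yf F hF ∈ Vset) (n : ℕ) : Xseq Cstar σ yf hy w₀ hw n ∈ Vset :=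
  hyV _ _

lemma mem_G_succ {P : List (Option A)} {n : ℕ} (h : P ∈ (Gseq Cstar σ yf hy w₀ hw n).1) :
    P ∈ (Gseq Cstar σ yf hy w₀ hw (n+1)).1 := by
  rw [Gseq_succ]; exact List.mem_append.mpr (Or.inl h)

lemma mem_G_mono {P : List (Option A)} {n n' : ℕ} (hle : n ≤ n')
    (h : P ∈ (Gseq Cstar σ yf hy w₀ hw n).1) : P ∈ (Gseq Cstar σ yf hy w₀ hw n').1 := by
  induction hle with
  | refl => exact h
  | step _ ih => exact mem_G_succ Cstar σ yf hy w₀ hw ih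

lemma w0_mem_G (n : ℕ) : w₀ ∈ (Gseq Cstar σ yf hy w₀ hw n).1 :=
  mem_G_mono Cstar σ yf hy w₀ hw (Nat.zero_le n) (List.mem_singleton.mpr rfl)

lemma step_mem {P : List (Option A)} {n : ℕ} (h : P ∈ (Gseq Cstar σ yf hy w₀ hw n).1) (a : A) :
    P * σ a (Xseq Cstar σ yf hy w₀ hw n) ∈ (Gseq Cstar σ yf hy w₀ hw (n+1)).1 := by
  rw [Gseq_succ]
  refine List.mem_append.mpr (Or.inr (List.mem_flatMap.mpr ⟨a, ?_, ?_⟩))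
  · exact Finset.mem_toList.mpr (Finset.mem_univ a)
  · exact List.mem_map.mpr ⟨P, h, rfl⟩

lemma prod_mem_G : ∀ (m : ℕ) (ns : Fin (m+1) → ℕ) (as : Fin (m+1) → A), StrictMono ns →
    w₀ * (List.ofFn fun i => σ (as i) (Xseq Cstar σ yf hy w₀ hw (ns i))).flatten
      ∈ (Gseq Cstar σ yf hy w₀ hw (ns (Fin.last m) + 1)).1 := by
  intro m
  induction m with
  | zero =>
    intro ns as _
    have : (List.ofFn fun i : Fin 1 => σ (as i) (Xseq Cstar σ yf hy w₀ hw (ns i))).flatten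
        = σ (as 0) (Xseq Cstar σ yf hy w₀ hw (ns 0)) := by
      simp [List.ofFn_succ]
    rw [this]
    exact step_mem Cstar σ yf hy w₀ hw (w0_mem_G Cstar σ yf hy w₀ hw (ns 0)) (as 0)
  | succ m ih =>
    intro ns as hns
    have hcast : StrictMono (fun i : Fin (m+1) => ns i.castSucc) :=
      fun i j hij => hns (Fin.castSucc_lt_castSucc_iff.mpr hij)
    have hQ := ih (fun i => ns i.castSucc) (fun i => as i.castSucc) hcast
    have hlt : ns ((Fin.last m).castSucc) + 1 ≤ ns (Fin.last (m+1)) :=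
      Nat.succ_le_of_lt (hns (Fin.castSucc_lt_last _))
    have hQ' := mem_G_mono Cstar σ yf hy w₀ hw hlt hQ
    have hstep := step_mem Cstar σ yf hy w₀ hw hQ' (as (Fin.last (m+1)))
    have hre : (List.ofFn fun i : Fin (m+2) => σ (as i) (Xseq Cstar σ yf hy w₀ hw (ns i))).flatten
        = (List.ofFn fun i : Fin (m+1) =>
            σ (as i.castSucc) (Xseq Cstar σ yf hy w₀ hw (ns i.castSucc))).flatten
          ++ σ (as (Fin.last (m+1))) (Xseq Cstar σ yf hy w₀ hw (ns (Fin.last (m+1)))) := by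
      rw [List.ofFn_succ' (fun i : Fin (m+2) => σ (as i) (Xseq Cstar σ yf hy w₀ hw (ns i)))]
      simp [List.concat_eq_append]
    rw [hre]
    show w₀ ++ (_ ++ _) ∈ _
    rw [← List.append_assoc]
    exact hstep

end Construct

section Main

variable [Fintype A]

theorem main (l : ℕ) (c : List A → Fin l) :
    ∃ (w₀ : List A) (X : ℕ → List (Option A)),
      (∀ n, IsLeftVariableWord (X n)) ∧
      ∃ k : Fin l,
        ∀ (m : ℕ) (ns : Fin (m + 1) → ℕ) (as : Fin (m + 1) → A),
          StrictMono ns →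
          c (w₀ ++ (List.ofFn fun idx => subst (X (ns idx)) (as idx)).flatten) = k := by
  classical
  set Wset : Set (List (Option A)) := Set.range (iota (A := A)) with hWset
  set Vset : Set (List (Option A)) := {x | IsLeftVariableWord x} with hVset
  have hWmul : ∀ x ∈ Wset, ∀ y ∈ Wset, x * y ∈ Wset := by
    rintro x ⟨u, rfl⟩ y ⟨v, rfl⟩
    exact ⟨u ++ v, (iota_mul u v)⟩
  have hVmul : ∀ x ∈ Vset, ∀ y : List (Option A), x * y ∈ Vset := by
    intro x hx y
    cases x with
    | nil => exact absurd hx (by simp [hVset, IsLeftVariableWord])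
    | cons o t =>
      have : o = none := by
        have := hx
        simp only [hVset, Set.mem_setOf_eq, IsLeftVariableWord, List.head?_cons,
          Option.some_inj] at this
        exact this
      subst this
      show IsLeftVariableWord ((none :: t) ++ y)
      rfl
  -- the family of closed left ideals of W̄
  set Wbar : Set (Ultrafilter (List (Option A))) := {U | Wset ∈ U} with hWbar
  set S : Set (Set (Ultrafilter (List (Option A)))) :=
    {L | L.Nonempty ∧ IsClosed L ∧ L ⊆ Wbar ∧ ∀ U ∈ Wbar, ∀ r ∈ L, U * r ∈ L} with hS
  have hWbarS : Wbar ∈ S := by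
    refine ⟨⟨pure (iota []), Ultrafilter.mem_pure.mpr ⟨[], rfl⟩⟩,
      ultrafilter_isClosed_basic _, subset_rfl, ?_⟩
    intro U hU r hr
    exact mul_large hU hr hWmul
  have hzorn : ∀ ch ⊆ S, IsChain (· ⊆ ·) ch → ch.Nonempty →
      ∃ lb ∈ S, ∀ s ∈ ch, lb ⊆ s := by
    intro ch hchS hchain hchne
    haveI : Nonempty ch := hchne.to_subtype
    refine ⟨⋂₀ ch, ⟨?_, ?_, ?_, ?_⟩, fun s hs => Set.sInter_subset_of_mem hs⟩
    · apply IsCompact.nonempty_sInter_of_directed_nonempty_isCompact_isClosed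
      · intro x hx y hy
        rcases hchain.total hx hy with h | h
        · exact ⟨x, hx, subset_rfl, h⟩
        · exact ⟨y, hy, h, subset_rfl⟩
      · exact fun U hU => (hchS hU).1
      · exact fun U hU => (hchS hU).2.1.isCompact
      · exact fun U hU => (hchS hU).2.1
    · exact isClosed_sInter fun U hU => (hchS hU).2.1
    · obtain ⟨t, ht⟩ := hchne
      exact (Set.sInter_subset_of_mem ht).trans (hchS ht).2.2.1
    · intro U hU r hr
      exact Set.mem_sInter.mpr fun t ht => (hchS ht).2.2.2 U hU r (Set.mem_sInter.mp hr t ht)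
  obtain ⟨L, -, hLmin⟩ := zorn_superset_nonempty S hzorn Wbar hWbarS
  obtain ⟨hLne, hLclosed, hLW, hLideal⟩ := hLmin.prop
  -- idempotent p in L
  obtain ⟨p, hpL, hpp⟩ := exists_idempotent_in_compact_subsemigroup
    (fun r => Ultrafilter.continuous_mul_left r) L hLne hLclosed.isCompact
    (fun x hx y hy => hLideal x (hLW hx) y hy)
  -- idempotents of L are right identities on L
  have rid : ∀ e ∈ L, e * e = e → ∀ x ∈ L, x * e = x := by
    intro e heL hee
    have himgS : (· * e) '' L ∈ S := by
      refine ⟨hLne.image _, (hLclosed.isCompact.image (Ultrafilter.continuous_mul_left e)).isClosed,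
        ?_, ?_⟩
      · rintro x ⟨z, hz, rfl⟩
        exact hLW (hLideal z (hLW hz) e heL)
      · rintro U hU r ⟨z, hz, rfl⟩
        exact ⟨U * z, hLideal U hU z hz, mul_assoc U z e⟩
    have himgL : (· * e) '' L ⊆ L := by
      rintro x ⟨z, hz, rfl⟩
      exact hLideal z (hLW hz) e heL
    have heq : (· * e) '' L = L :=
      le_antisymm himgL (hLmin.2 himgS himgL)
    intro x hx
    rw [← heq] at hx
    obtain ⟨z, hz, rfl⟩ := hx
    rw [mul_assoc, hee]
  -- idempotent q in Z
  have hpW : Wset ∈ p := hLW hpL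
  set Z : Set (Ultrafilter (List (Option A))) := {r | Vset ∈ r} ∩ {r | r * p = r} with hZ
  have hZne : Z.Nonempty := by
    refine ⟨pure [none] * p, ?_, ?_⟩
    · exact mul_large (Ultrafilter.mem_pure.mpr (by rfl)) Filter.univ_mem
        (fun x hx y _ => hVmul x hx y)
    · show pure [none] * p * p = pure [none] * p
      rw [mul_assoc, hpp]
  obtain ⟨q, hqZ, hqq⟩ := exists_idempotent_in_compact_subsemigroup
    (fun r => Ultrafilter.continuous_mul_left r) Z hZne
    ((IsClosed.inter (ultrafilter_isClosed_basic _)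
      (isClosed_eq (Ultrafilter.continuous_mul_left p) continuous_id)).isCompact)
    (by
      intro x hx y hy
      refine ⟨mul_large hx.1 Filter.univ_mem (fun a ha b _ => hVmul a ha b), ?_⟩
      show x * y * p = x * y
      rw [mul_assoc, hy.2])
  have hqV : Vset ∈ q := hqZ.1
  have hqp : q * p = q := hqZ.2
  -- the left-zero system E
  set E : Option A → Ultrafilter (List (Option A)) :=
    fun o => o.elim p (fun a => q.map (sig a)) with hE
  have hmapp : ∀ a : A, p.map (sig a) = p := by
    intro a
    refine umap_fix (usup hpW ?_)
    rintro x ⟨u, rfl⟩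
    exact sig_iota a u
  have hEW : ∀ o, E o ∈ L := by
    rintro (_ | a)
    · exact hpL
    · have h1 : Wset ∈ q.map (sig a) := by
        rw [Ultrafilter.mem_map]
        exact usup Filter.univ_mem (fun x _ => sig_mem_range a x)
      have h2 : q.map (sig a) * p = q.map (sig a) := by
        conv_lhs => rw [← hmapp a]
        rw [← umap_mul (sig a) (sig_mul a), hqp]
      have := hLideal (q.map (sig a)) h1 p hpL
      rwa [h2] at this
  have hEidem : ∀ o, E o * E o = E o := by
    rintro (_ | a)
    · exact hpp
    · show q.map (sig a) * q.map (sig a) = q.map (sig a)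
      rw [← umap_mul (sig a) (sig_mul a), hqq]
  have hEE : ∀ o o', E o * E o' = E o :=
    fun o o' => rid (E o') (hEW o') (hEidem o') (E o) (hEW o)
  -- pick a color
  haveI : Nonempty (Fin l) := ⟨c []⟩
  set Cf : Fin l → Set (List (Option A)) := fun k => iota '' {u | c u = k} with hCf
  have hCcover : Wset ⊆ ⋃ k ∈ (Set.univ : Set (Fin l)), Cf k := by
    rintro w ⟨u, rfl⟩
    exact Set.mem_biUnion (Set.mem_univ (c u)) ⟨u, rfl, rfl⟩
  obtain ⟨k, -, hk⟩ := (Ultrafilter.finite_biUnion_mem_iff Set.finite_univ).mp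
    (usup hpW hCcover)
  -- the star set
  set Cstar : Set (List (Option A)) :=
    {w | w ∈ Cf k ∧ ∀ o, {z | w * z ∈ Cf k} ∈ E o} with hCstar
  have hCstar_mem : Cstar ∈ p := by
    have h1 : ∀ o, {w | {z | w * z ∈ Cf k} ∈ E o} ∈ p := by
      intro o
      have : Cf k ∈ p * E o := by
        have h := hEE none o
        rw [show E none = p from rfl] at h
        rw [h]; exact hk
      exact mem_umul.mp this
    have : Cf k ∩ ⋂ o, {w | {z | w * z ∈ Cf k} ∈ E o} ∈ p := uinter hk (uiInter h1)
    refine usup this ?_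
    rintro w ⟨hw1, hw2⟩
    exact ⟨hw1, fun o => Set.mem_iInter.mp hw2 o⟩
  have hCstar_persist : ∀ w ∈ Cstar, ∀ o, {z | w * z ∈ Cstar} ∈ E o := by
    rintro w ⟨hwC, hwE⟩ o
    have h2 : ∀ o', {z | {z' | z * z' ∈ {y | w * y ∈ Cf k}} ∈ E o'} ∈ E o := by
      intro o'
      have : {y | w * y ∈ Cf k} ∈ E o * E o' := by rw [hEE o o']; exact hwE o
      exact mem_umul.mp this
    have hbig : {z | w * z ∈ Cf k} ∩
        ⋂ o', {z | {z' | z * z' ∈ {y | w * y ∈ Cf k}} ∈ E o'} ∈ E o :=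
      uinter (hwE o) (uiInter h2)
    refine usup hbig ?_
    rintro z ⟨hz1, hz2⟩
    refine ⟨hz1, fun o' => ?_⟩
    have := Set.mem_iInter.mp hz2 o'
    simp only [Set.mem_setOf_eq] at this ⊢
    convert this using 2
    ext z'
    simp only [Set.mem_setOf_eq, mul_assoc]
  -- the picking lemma
  have pick : ∀ F : List (List (Option A)), (∀ P ∈ F, P ∈ Cstar) →
      ∃ y, y ∈ Vset ∧ ∀ a : A, ∀ P ∈ F, P * sig a y ∈ Cstar := by
    intro F hF
    have hT : ∀ a : A, (sig a) ⁻¹' {z | ∀ P ∈ F, P * z ∈ Cstar} ∈ q := by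
      intro a
      have hfin : {P | P ∈ F}.Finite := F.finite_toSet
      have h1 : (⋂ P ∈ {P | P ∈ F}, {z | P * z ∈ Cstar}) ∈ E (some a) :=
        (Filter.biInter_mem hfin).mpr fun P hP =>
          Ultrafilter.mem_coe.mpr (hCstar_persist P (hF P hP) (some a))
      have h2 : {z | ∀ P ∈ F, P * z ∈ Cstar} ∈ E (some a) := by
        refine usup (Ultrafilter.mem_coe.mp h1) ?_
        intro z hz P hP
        exact Set.mem_iInter.mp (Set.mem_iInter.mp hz P) hP
      exact Ultrafilter.mem_map.mp h2
    have hmem : Vset ∩ ⋂ a : A, (sig a) ⁻¹' {z | ∀ P ∈ F, P * z ∈ Cstar} ∈ q :=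
      uinter hqV (uiInter hT)
    obtain ⟨y, hy1, hy2⟩ := Ultrafilter.nonempty_of_mem hmem
    refine ⟨y, hy1, fun a P hP => ?_⟩
    exact Set.mem_iInter.mp hy2 a P hP
  -- choose w₀
  obtain ⟨wb, hwb⟩ := Ultrafilter.nonempty_of_mem hCstar_mem
  obtain ⟨w₀, hw₀k, hw₀eq⟩ := hwb.1
  -- run the construction
  choose yf hyV hyC using pick
  have hy : ∀ F hF, ∀ a, ∀ P ∈ F, P * sig a (yf F hF) ∈ Cstar := fun F hF a P hP =>
    hyC F hF a P hP
  rw [← hw₀eq] at hwb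
  refine ⟨w₀, fun n => Xseq Cstar sig yf hy (iota w₀) hwb n, ?_, k, ?_⟩
  · intro n
    exact Xseq_mem_V Cstar sig yf hy (iota w₀) hwb Vset hyV n
  · intro m ns as hns
    have hmem := prod_mem_G Cstar sig yf hy (iota w₀) hwb m ns as hns
    have hCst := (Gseq Cstar sig yf hy (iota w₀) hwb (ns (Fin.last m) + 1)).2 _ hmem
    obtain ⟨u, hcu, hueq⟩ := hCst.1
    have hiota : iota (w₀ ++ (List.ofFn fun idx =>
        subst (Xseq Cstar sig yf hy (iota w₀) hwb (ns idx)) (as idx)).flatten)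
        = iota w₀ * (List.ofFn fun i =>
            sig (as i) (Xseq Cstar sig yf hy (iota w₀) hwb (ns i))).flatten := by
      rw [iota_mul]
      congr 1
      show List.map some _ = _
      rw [List.map_flatten, List.map_ofFn]
      congr 1
      exact congrArg List.ofFn (funext fun i => by
        show List.map some (subst _ (as i)) = sig (as i) _
        simp [subst, sig, List.map_map, Function.comp])
    have : iota u = iota (w₀ ++ (List.ofFn fun idx =>
        subst (Xseq Cstar sig yf hy (iota w₀) hwb (ns idx)) (as idx)).flatten) := by
      rw [hiota]; exact hueq
    have := iota_inj this
    rw [← this]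
    exact hcu

end Main

end IHJaux

/-- infinite Hales–Jewett theorem for left-variable words. -/
theorem infinite_hales_jewett_left_variable (A : Type) [Fintype A] (l : ℕ)
    (c : List A → Fin l) :
    ∃ (w₀ : List A) (X : ℕ → List (Option A)),
      (∀ n, IsLeftVariableWord (X n)) ∧
      ∃ k : Fin l,
        ∀ (m : ℕ) (ns : Fin (m + 1) → ℕ) (as : Fin (m + 1) → A),
          StrictMono ns →
          c (w₀ ++ (List.ofFn fun idx => subst (X (ns idx)) (as idx)).flatten) = k := by
  exact IHJaux.main l c
end

section
/- Given a dense G_δ subset 𝒢 of F_{ω,K} (with the completely metrizable topology generated by sets [(t,i)] of connections extending a finite initial segment (t,i) ∈ F_{L,K}) and a fixed (t,i) ∈ F_{L,K}, there exists an infinite block sequence (D_p) of finite subsets of ℕ with max D_p < min D_{p+1}, and surjections f_p : D_p → K, such that every (s,j) ∈ F_{ω,K} with (s↾L, j↾K) = (t,i) for which s extends infinitely many of the f_p belongs to 𝒢. -/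
def IsRigidSurjNat (K : ℕ) (t : ℕ → Fin K) : Prop :=
  Function.Surjective t ∧
    ∀ n : ℕ, ∃ m : ℕ, m ≤ K ∧
      ∀ x : Fin K, ((x : ℕ) < m ↔ ∃ y : ℕ, y < n ∧ t y = x)

def IsConnectionNat (K : ℕ) (t : ℕ → Fin K) (i : Fin K → ℕ) : Prop :=
  IsRigidSurjNat K t ∧ (∀ x, t (i x) = x) ∧
    ∀ (x : Fin K) (y : ℕ), y ≤ i x → t y ≤ (x : ℕ)

def IsRigidSurjFin (L K : ℕ) (t : Fin L → Fin K) : Prop :=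
  Function.Surjective t ∧
    ∀ n : ℕ, n ≤ L → ∃ m : ℕ, m ≤ K ∧
      ∀ x : Fin K, ((x : ℕ) < m ↔ ∃ y : Fin L, (y : ℕ) < n ∧ t y = x)

def IsConnectionFin (L K : ℕ) (t : Fin L → Fin K) (i : Fin K → Fin L) : Prop :=
  IsRigidSurjFin L K t ∧ (∀ x, t (i x) = x) ∧
    ∀ (x : Fin K) (y : Fin L), y ≤ i x → t y ≤ x

/-- F_{ω,K}, topologized as a subspace of a product of discrete spaces; this
is the completely metrizable topology generated by the sets [(t,i)]. -/
def FOmega (K : ℕ) : Type :=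
  { p : (ℕ → Fin K) × (Fin K → ℕ) // IsConnectionNat K p.1 p.2 }

instance (K : ℕ) : TopologicalSpace (FOmega K) :=
  inferInstanceAs (TopologicalSpace
    { p : (ℕ → Fin K) × (Fin K → ℕ) // IsConnectionNat K p.1 p.2 })

/-!
Write `G = ⋂ₖ Uₖ` with every `Uₖ` open and dense. Overwriting the first `L` values of a sequence
by `t` maps `ℕ → Fin K` continuously onto the basic open set `[(t,i)]`, and the preimages of the `Uₖ` are
still dense, so it suffices to argue in `ℕ → Fin K`. There, for an open dense `V` and a position
`N`, some finite pattern on `[N, M)` forces membership in `V` whatever the sequence does below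
`N`: the finitely many patterns on `[0, N)` are handled one after another, each time extending
the current pattern by density and openness of `V`. Block `p` starts with a pattern hitting every
colour and then forces `U₀ ∩ ⋯ ∩ Uₚ`, so a sequence extending infinitely many blocks lies in
every `Uₖ`.
-/

open Set PiNat TopologicalSpace

theorem exists_surjOn_Ico {α : Type*} [Finite α] [Nonempty α] (N : ℕ) :
    ∃ c, ∃ σ : ℕ → α, SurjOn σ (Ico N (N + c)) univ := by
  obtain ⟨c, ⟨e⟩⟩ := Finite.exists_equiv_fin α
  exact ⟨c, fun n => if h : n - N < c then e.symm ⟨n - N, h⟩ else Classical.arbitrary α,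
    fun x _ => ⟨N + e x, ⟨by omega, by omega⟩, by simp⟩⟩

section BlockSequence

variable {α : Type*} [TopologicalSpace α] [DiscreteTopology α]

theorem exists_cylinder_subset_of_isOpen {U : Set (ℕ → α)} (hU : IsOpen U) {x : ℕ → α}
    (hx : x ∈ U) : ∃ n, cylinder x n ⊆ U := by
  obtain ⟨_, ⟨y, n, rfl⟩, hxy, hyU⟩ :=
    (isTopologicalBasis_cylinders fun _ => α).exists_subset_of_mem_open hx hU
  exact ⟨n, (mem_cylinder_iff_eq.1 hxy).trans_subset hyU⟩

theorem exists_mem_cylinder_cylinder_subset {W : Set (ℕ → α)} (hWo : IsOpen W) (hWd : Dense W)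
    (x : ℕ → α) (m : ℕ) : ∃ y ∈ cylinder x m, ∃ n ≥ m, cylinder y n ⊆ W := by
  obtain ⟨y, hyx, hyW⟩ :=
    hWd.inter_open_nonempty _ (isOpen_cylinder _ x m) ⟨x, self_mem_cylinder x m⟩
  obtain ⟨n, hn⟩ := exists_cylinder_subset_of_isOpen hWo hyW
  exact ⟨y, hyx, max n m, le_max_right n m, (cylinder_anti y (le_max_left n m)).trans hn⟩

theorem exists_forcing_extension_of_dense_isOpen [Finite α] {W : Set (ℕ → α)} (hWo : IsOpen W)
    (hWd : Dense W) {N M₀ : ℕ} (hN : N ≤ M₀) (σ₀ : ℕ → α) :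
    ∃ M ≥ M₀, ∃ σ : ℕ → α, EqOn σ σ₀ (Ico N M₀) ∧ ∀ s, EqOn s σ (Ico N M) → s ∈ W := by
  suffices h : ∀ P : Set (Fin N → α), P.Finite → ∃ M ≥ M₀, ∃ σ : ℕ → α,
      EqOn σ σ₀ (Ico N M₀) ∧
        ∀ u ∈ P, ∀ s : ℕ → α, (∀ k : Fin N, s k = u k) → EqOn s σ (Ico N M) → s ∈ W by
    obtain ⟨M, hM, σ, hσ₀, hσ⟩ := h univ finite_univ
    exact ⟨M, hM, σ, hσ₀, fun s hs => hσ (fun k => s k) (mem_univ _) s (fun _ => rfl) hs⟩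
  intro P hP
  induction P, hP using Set.Finite.induction_on with
  | empty => exact ⟨M₀, le_rfl, σ₀, eqOn_refl _ _, by simp⟩
  | @insert u P _ _ ih =>
    obtain ⟨M, hM, σ, hσ₀, hσ⟩ := ih
    obtain ⟨y, hyx, M', hM', hyW⟩ := exists_mem_cylinder_cylinder_subset hWo hWd
      (fun n => if h : n < N then u ⟨n, h⟩ else σ n) M
    have hyσ : EqOn y σ (Ico N M) := fun n hn => by
      simpa [hn.1.not_gt] using hyx n hn.2
    refine ⟨M', hM.trans hM', y, fun n hn => (hyσ ⟨hn.1, hn.2.trans_le hM⟩).trans (hσ₀ hn), ?_⟩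
    rintro v (rfl | hv) s hs hsy
    · refine hyW fun n hn => ?_
      by_cases hnN : n < N
      · simpa [hnN, hs ⟨n, hnN⟩] using (hyx n (hnN.trans_le (hN.trans hM))).symm
      · exact hsy ⟨not_lt.1 hnN, hn⟩
    · exact hσ v hv s hs ((hsy.mono (Ico_subset_Ico_right hM')).trans hyσ)

theorem exists_surjOn_forcing_of_dense_isOpen [Finite α] [Nonempty α] {W : Set (ℕ → α)}
    (hWo : IsOpen W) (hWd : Dense W) (N : ℕ) :
    ∃ M, ∃ σ : ℕ → α, SurjOn σ (Ico N M) univ ∧ ∀ s, EqOn s σ (Ico N M) → s ∈ W := by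
  obtain ⟨c, σ₀, hσ₀⟩ := exists_surjOn_Ico (α := α) N
  obtain ⟨M, hM, σ, hσσ₀, hσW⟩ :=
    exists_forcing_extension_of_dense_isOpen hWo hWd (Nat.le_add_right N c) σ₀
  exact ⟨M, σ, (hσ₀.congr hσσ₀.symm).mono (Ico_subset_Ico_right hM) subset_rfl, hσW⟩

theorem exists_blocks_forcing_of_dense_isOpen [Finite α] [Nonempty α] {W : ℕ → Set (ℕ → α)}
    (hWo : ∀ k, IsOpen (W k)) (hWd : ∀ k, Dense (W k)) :
    ∃ (a : ℕ → ℕ) (f : ℕ → ℕ → α), StrictMono a ∧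
      (∀ p, SurjOn (f p) (Ico (a p) (a (p + 1))) univ) ∧
      ∀ s, {p | EqOn s (f p) (Ico (a p) (a (p + 1)))}.Infinite → ∀ k, s ∈ W k := by
  have hstage (p N : ℕ) : ∃ M, ∃ σ : ℕ → α, SurjOn σ (Ico N M) univ ∧
      ∀ s, EqOn s σ (Ico N M) → s ∈ ⋂₀ (W '' Iic p) := by
    have hfin := (finite_Iic p).image W
    exact exists_surjOn_forcing_of_dense_isOpen
      (hfin.isOpen_sInter (forall_mem_image.2 fun k _ => hWo k))
      (hfin.dense_sInter (forall_mem_image.2 fun k _ => hWo k)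
        (forall_mem_image.2 fun k _ => hWd k)) N
  choose M σ hsurj hforce using hstage
  let a : ℕ → ℕ := fun p => Nat.rec 0 (fun p N => M p N) p
  refine ⟨a, fun p => σ p (a p), strictMono_nat_of_lt_succ fun p => ?_,
    fun p => hsurj p (a p), fun s hs k => ?_⟩
  · obtain ⟨n, hn, -⟩ := hsurj p (a p) (mem_univ (Classical.arbitrary α))
    exact hn.1.trans_lt hn.2
  · obtain ⟨p, hp, hkp⟩ := hs.exists_gt k
    exact sInter_subset_of_mem (mem_image_of_mem W (mem_Iic.2 hkp.le)) (hforce p (a p) s hp)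

end BlockSequence

section Prefix

variable {α : Type*} {L : ℕ}

def withPrefix (t : Fin L → α) (s : ℕ → α) (n : ℕ) : α :=
  if h : n < L then t ⟨n, h⟩ else s n

variable {t : Fin L → α} {s : ℕ → α} {n : ℕ}

theorem withPrefix_of_lt (h : n < L) : withPrefix t s n = t ⟨n, h⟩ := dif_pos h

theorem withPrefix_of_le (h : L ≤ n) : withPrefix t s n = s n := dif_neg h.not_gt

@[simp]
theorem withPrefix_fin (y : Fin L) : withPrefix t s y = t y := withPrefix_of_lt y.isLt

@[simp]
theorem withPrefix_withPrefix (u : Fin L → α) :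
    withPrefix t (withPrefix u s) = withPrefix t s := by
  funext n
  rcases lt_or_ge n L with h | h
  · simp only [withPrefix_of_lt h]
  · simp only [withPrefix_of_le h]

theorem withPrefix_eq_self (h : ∀ y : Fin L, s y = t y) : withPrefix t s = s := by
  funext n
  rcases lt_or_ge n L with hn | hn
  · rw [withPrefix_of_lt hn, ← h]
  · exact withPrefix_of_le hn

theorem continuous_withPrefix [TopologicalSpace α] (t : Fin L → α) :
    Continuous (withPrefix t) :=
  continuous_pi fun n => by
    unfold withPrefix
    split_ifs
    exacts [continuous_const, continuous_apply n]

end Prefix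

section FOmega

variable {K L : ℕ} {t : Fin L → Fin K} {i : Fin K → Fin L}

theorem isConnectionNat_withPrefix (hti : IsConnectionFin L K t i) (s : ℕ → Fin K) :
    IsConnectionNat K (withPrefix t s) (fun x => i x) := by
  obtain ⟨⟨hsurj, hrigid⟩, hsec, hle⟩ := hti
  refine ⟨⟨fun x => ?_, fun n => ?_⟩, fun x => by simp [hsec], fun x y hy => ?_⟩
  · obtain ⟨y, rfl⟩ := hsurj x
    exact ⟨y, withPrefix_fin y⟩
  · rcases le_or_gt n L with hn | hn
    · obtain ⟨m, hmK, hm⟩ := hrigid n hn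
      refine ⟨m, hmK, fun x => (hm x).trans ⟨?_, ?_⟩⟩
      · rintro ⟨y, hy, rfl⟩
        exact ⟨y, hy, withPrefix_fin y⟩
      · rintro ⟨y, hy, rfl⟩
        exact ⟨⟨y, hy.trans_le hn⟩, hy, (withPrefix_of_lt _).symm⟩
    · refine ⟨K, le_rfl, fun x => iff_of_true x.isLt ?_⟩
      obtain ⟨y, rfl⟩ := hsurj x
      exact ⟨y, y.isLt.trans hn, withPrefix_fin y⟩
  · have hyL : y < L := hy.trans_lt (i x).isLt
    rw [withPrefix_of_lt hyL]
    exact hle x ⟨y, hyL⟩ hy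

/-- A parametrization of the basic open set `[(t,i)]` by `ℕ → Fin K`. -/
def FOmega.ofPrefix (hti : IsConnectionFin L K t i) (s : ℕ → Fin K) : FOmega K :=
  ⟨(withPrefix t s, fun x => i x), isConnectionNat_withPrefix hti s⟩

variable (hti : IsConnectionFin L K t i)

theorem FOmega.continuous_ofPrefix : Continuous (FOmega.ofPrefix hti) :=
  ((continuous_withPrefix t).prodMk continuous_const).subtype_mk _

theorem FOmega.ofPrefix_withPrefix (u : Fin L → Fin K) (s : ℕ → Fin K) :
    FOmega.ofPrefix hti (withPrefix u s) = FOmega.ofPrefix hti s :=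
  Subtype.ext (by simp [FOmega.ofPrefix])

theorem FOmega.ofPrefix_eq (sj : FOmega K) (ht : ∀ y : Fin L, sj.1.1 y = t y)
    (hi : ∀ x, sj.1.2 x = i x) : FOmega.ofPrefix hti sj.1.1 = sj :=
  Subtype.ext (Prod.ext (withPrefix_eq_self ht) (funext fun x => (hi x).symm))

theorem FOmega.dense_preimage_ofPrefix {V : Set (FOmega K)} (hVd : Dense V) :
    Dense (FOmega.ofPrefix hti ⁻¹' V) := by
  refine (isTopologicalBasis_cylinders fun _ => Fin K).dense_iff.2 ?_
  rintro _ ⟨s, n, rfl⟩ -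
  set N := max n L
  have hO : IsOpen (Subtype.val ⁻¹'
      (cylinder (withPrefix t s) N ×ˢ {fun x => (i x : ℕ)}) : Set (FOmega K)) :=
    ((isOpen_cylinder _ _ _).prod (isOpen_discrete _)).preimage continuous_subtype_val
  obtain ⟨sj, ⟨hsj, hsji⟩, hsjV⟩ := hVd.inter_open_nonempty _ hO
    ⟨FOmega.ofPrefix hti s, self_mem_cylinder _ _, rfl⟩
  refine ⟨withPrefix (fun y : Fin L => s y) sj.1.1, fun m hm => ?_, ?_⟩
  · rcases lt_or_ge m L with hmL | hmL
    · exact withPrefix_of_lt hmL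
    · rw [withPrefix_of_le hmL, hsj m (hm.trans_le (le_max_left _ _)), withPrefix_of_le hmL]
  · have ht : ∀ y : Fin L, sj.1.1 y = t y := fun y => by
      rw [hsj y (y.isLt.trans_le (le_max_right _ _)), withPrefix_fin]
    rw [mem_preimage, FOmega.ofPrefix_withPrefix, FOmega.ofPrefix_eq hti sj ht (congrFun hsji)]
    exact hsjV

end FOmega

/-- for a dense G_δ subset 𝒢 of F_{ω,K} and a fixed finite
connection (t,i) ∈ F_{L,K}, there is a block sequence (D_p) of finite subsets
of ℕ and surjections f_p : D_p → K such that every (s,j) ∈ F_{ω,K} with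
(s↾L, j↾K) = (t,i) whose s extends infinitely many of the f_p lies in 𝒢. -/
theorem dense_Gdelta_block_sequence (K L : ℕ) (hKL : K < L)
    (G : Set (FOmega K)) (hGdense : Dense G) (hGdelta : IsGδ G)
    (t : Fin L → Fin K) (i : Fin K → Fin L) (hti : IsConnectionFin L K t i) :
    ∃ (D : ℕ → Finset ℕ) (f : ℕ → ℕ → Fin K),
      (∀ p, (D p).Nonempty) ∧
      (∀ p q : ℕ, p < q → ∀ m ∈ D p, ∀ n ∈ D q, m < n) ∧
      (∀ p, ∀ x : Fin K, ∃ n ∈ D p, f p n = x) ∧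
      ∀ sj : FOmega K,
        (∀ y : Fin L, sj.1.1 (y : ℕ) = t y) →
        (∀ x : Fin K, sj.1.2 x = ((i x : Fin L) : ℕ)) →
        {p : ℕ | ∀ n ∈ D p, sj.1.1 n = f p n}.Infinite →
        sj ∈ G := by
  have : Nonempty (Fin K) := ⟨t ⟨0, by omega⟩⟩
  obtain ⟨U, hUo, rfl⟩ := hGdelta.eq_iInter_nat
  obtain ⟨a, f, ha, hsurj, hmem⟩ := exists_blocks_forcing_of_dense_isOpen
    (fun k => (hUo k).preimage (FOmega.continuous_ofPrefix hti))
    (fun k => FOmega.dense_preimage_ofPrefix hti (hGdense.mono (iInter_subset U k)))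
  refine ⟨fun p => Finset.Ico (a p) (a (p + 1)), f,
    fun p => Finset.nonempty_Ico.2 (ha p.lt_succ_self), fun p q hpq m hm n hn => ?_,
    fun p x => ?_, fun sj ht hi hinf => ?_⟩
  · rw [Finset.mem_Ico] at hm hn
    exact hm.2.trans_le ((ha.monotone hpq).trans hn.1)
  · obtain ⟨n, hn, hfx⟩ := hsurj p (mem_univ x)
    exact ⟨n, Finset.mem_Ico.2 hn, hfx⟩
  · rw [← FOmega.ofPrefix_eq hti sj ht hi]
    exact mem_iInter.2 (hmem sj.1.1 (by simpa [EqOn] using hinf))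
end
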